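/- Let ω, t, v, λ⁺, λ⁻ be real numbers, indexed componentwise by i ∈ Fin n, i.e. ω, t, v, λ⁺, λ⁻ : Fin n → ℝ, satisfying for every i the KKT conditions of the auxiliary-variable subsystem: primal feasibility t i − v i ≥ 0 and t i + v i ≥ 0; dual feasibility λ⁺ i ≥ 0 and λ⁻ i ≥ 0; stationarity with respect to t: ω i − λ⁺ i − λ⁻ i = 0; complementary slackness λ⁺ i · (t i − v i) = 0 and λ⁻ i · (t i + v i) = 0; and positive weights ω i > 0. Then for every index i: if v i ≠ 0, then exactly one of the two bound constraints is active, i.e. exactly one of the equalities t i − v i = 0 and t i + v i = 0 holds (Xor); and if v i = 0, then t i = 0. -/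
import Mathlib


/-- Theorem 1 of the paper (activity of auxiliary constraints), componentwise:
at a KKT point of the auxiliary-variable subsystem with positive weights,
for every index `i`, if the slack `v i` is nonzero then exactly one of the
two bound constraints `t i - v i = 0` and `t i + v i = 0` is active, and if
`v i = 0` then `t i = 0`. -/
theorem auxiliary_constraint_activity (n : ℕ)
    (ω t v lp lm : Fin n → ℝ)
    (hprimal₁ : ∀ i, t i - v i ≥ 0)
    (hprimal₂ : ∀ i, t i + v i ≥ 0)
    (hdual₁ : ∀ i, lp i ≥ 0)
    (hdual₂ : ∀ i, lm i ≥ 0)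
    (hstat : ∀ i, ω i - lp i - lm i = 0)
    (hcs₁ : ∀ i, lp i * (t i - v i) = 0)
    (hcs₂ : ∀ i, lm i * (t i + v i) = 0)
    (hω : ∀ i, ω i > 0) :
    ∀ i, (v i ≠ 0 → Xor' (t i - v i = 0) (t i + v i = 0)) ∧
      (v i = 0 → t i = 0) := by
  intro i
  -- at least one constraint is active
  have hactive : t i - v i = 0 ∨ t i + v i = 0 := by
    have h := hstat i
    by_cases hp : lp i = 0
    · right
      have hm : lm i > 0 := by have := hω i; nlinarith
      have := hcs₂ i
      exact by nlinarith
    · left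
      have hp' : lp i > 0 := lt_of_le_of_ne (hdual₁ i) (Ne.symm hp)
      have := hcs₁ i
      exact by nlinarith
  constructor
  · intro hv
    rcases hactive with h | h
    · exact Or.inl ⟨h, by intro h2; apply hv; linarith⟩
    · exact Or.inr ⟨h, by intro h2; apply hv; linarith⟩
  · intro hv
    rcases hactive with h | h <;> simp [hv] at h <;> linarith
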